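/- For a pure bipartite state, the entanglement of formation equals the local von Neumann entropy: if ρ_AB = |ψ⟩⟨ψ| for a unit vector |ψ⟩ ∈ ℂ^{d_A} ⊗ ℂ^{d_B}, then E_F(ρ_AB) = S(ρ_A), where ρ_A = Tr_B[ρ_AB]. -/

import Mathlib

open scoped Kronecker ComplexOrder

/-- Von Neumann entropy (natural logarithm) of a matrix, via its eigenvalues
(`0` if the matrix is not Hermitian; `Real.log 0 = 0` handles zero eigenvalues). -/
noncomputable def vN {n : Type*} [Fintype n] [DecidableEq n] (ρ : Matrix n n ℂ) : ℝ :=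
  if h : ρ.IsHermitian then -∑ i, h.eigenvalues i * Real.log (h.eigenvalues i) else 0

/-- Partial trace over the second tensor factor. -/
noncomputable def ptraceB {A B : Type*} [Fintype B] (ρ : Matrix (A × B) (A × B) ℂ) :
    Matrix A A ℂ := Matrix.of fun a a' => ∑ b, ρ (a, b) (a', b)

/-- Partial trace over the first tensor factor. -/
noncomputable def ptraceA {A B : Type*} [Fintype A] (ρ : Matrix (A × B) (A × B) ℂ) :
    Matrix B B ℂ := Matrix.of fun b b' => ∑ a, ρ (a, b) (a, b')

/-- Partial trace over the third factor of a tripartite system `A × B × C`. -/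
noncomputable def ptraceC3 {A B C : Type*} [Fintype C] (ρ : Matrix (A × B × C) (A × B × C) ℂ) :
    Matrix (A × B) (A × B) ℂ := Matrix.of fun x y => ∑ c, ρ (x.1, x.2, c) (y.1, y.2, c)

/-- Partial trace over the second factor of a tripartite system `A × B × C`. -/
noncomputable def ptraceB3 {A B C : Type*} [Fintype B] (ρ : Matrix (A × B × C) (A × B × C) ℂ) :
    Matrix (A × C) (A × C) ℂ := Matrix.of fun x y => ∑ b, ρ (x.1, b, x.2) (y.1, b, y.2)

/-- Entanglement of formation: infimum of the average local entropy over finite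
pure-state ensembles realizing `ρAB` (entropies in natural logarithm). -/
noncomputable def EoF {A B : Type*} [Fintype A] [DecidableEq A] [Fintype B] [DecidableEq B]
    (ρAB : Matrix (A × B) (A × B) ℂ) : ℝ :=
  sInf { x : ℝ | ∃ (n : ℕ) (p : Fin n → ℝ) (ψ : Fin n → (A × B → ℂ)),
    (∀ i, 0 ≤ p i) ∧ (∑ i, p i = 1) ∧ (∀ i, ∑ v, ‖ψ i v‖ ^ 2 = 1) ∧
    ρAB = ∑ i, (p i : ℂ) • Matrix.vecMulVec (ψ i) (star (ψ i)) ∧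
    x = ∑ i, p i * vN (ptraceB (Matrix.vecMulVec (ψ i) (star (ψ i)))) }

/-! In any decomposition `|ψ⟩⟨ψ| = ∑ pᵢ |φᵢ⟩⟨φᵢ|`, the quadratic form at a vector `w ⊥ ψ`
gives `∑ pᵢ |⟨φᵢ, w⟩|² = 0`, so each `φᵢ` with `pᵢ > 0` is orthogonal to `ψ^⊥`, i.e. a unit
multiple of `ψ`. Hence every ensemble of a pure state consists of that state alone, and the set
whose infimum defines `EoF` is the singleton `{S(ρ_A)}`. -/

open Matrix

section PureEnsemble

variable {ι κ : Type*} [Fintype ι] [Fintype κ]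

lemma star_dotProduct_self_eq_sum_norm_sq (v : ι → ℂ) :
    star v ⬝ᵥ v = ((∑ i, ‖v i‖ ^ 2 : ℝ) : ℂ) := by
  push_cast
  exact Finset.sum_congr rfl fun i _ => Complex.conj_mul' (v i)

lemma star_dotProduct_vecMulVec_mulVec (a w : ι → ℂ) :
    star w ⬝ᵥ (vecMulVec a (star a) *ᵥ w) = star (star a ⬝ᵥ w) * (star a ⬝ᵥ w) := by
  rw [vecMulVec_mulVec, op_smul_eq_smul, dotProduct_smul, smul_eq_mul, mul_comm,
    star_dotProduct]

lemma dotProduct_eq_zero_of_vecMulVec_eq_sum {ψ w : ι → ℂ} {p : κ → ℝ} {φ : κ → ι → ℂ}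
    (hp : ∀ j, 0 ≤ p j)
    (hρ : vecMulVec ψ (star ψ) = ∑ j, (p j : ℂ) • vecMulVec (φ j) (star (φ j)))
    (hw : star ψ ⬝ᵥ w = 0) {i : κ} (hi : p i ≠ 0) : star (φ i) ⬝ᵥ w = 0 := by
  have hsum : ∑ j, (p j : ℂ) * (star (star (φ j) ⬝ᵥ w) * (star (φ j) ⬝ᵥ w)) = 0 := by
    have := congrArg (fun M => star w ⬝ᵥ (M *ᵥ w)) hρ
    simp only [star_dotProduct_vecMulVec_mulVec, hw, mul_zero, sum_mulVec,
      dotProduct_sum, smul_mulVec, dotProduct_smul, smul_eq_mul] at this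
    exact this.symm
  have hnonneg : ∀ j ∈ Finset.univ,
      0 ≤ (p j : ℂ) * (star (star (φ j) ⬝ᵥ w) * (star (φ j) ⬝ᵥ w)) := fun j _ =>
    mul_nonneg (by exact_mod_cast hp j) (star_mul_self_nonneg _)
  have hterm := (Finset.sum_eq_zero_iff_of_nonneg hnonneg).mp hsum i (Finset.mem_univ i)
  rw [mul_eq_zero, Complex.ofReal_eq_zero, CStarRing.star_mul_self_eq_zero_iff] at hterm
  exact hterm.resolve_left hi

lemma eq_smul_of_forall_dotProduct_eq_zero {ψ φ : ι → ℂ} (hψ : star ψ ⬝ᵥ ψ = 1)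
    (h : ∀ w, star ψ ⬝ᵥ w = 0 → star φ ⬝ᵥ w = 0) : φ = (star ψ ⬝ᵥ φ) • ψ := by
  set w := φ - (star ψ ⬝ᵥ φ) • ψ
  have hψw : star ψ ⬝ᵥ w = 0 := by
    rw [dotProduct_sub, dotProduct_smul, hψ, smul_eq_mul, mul_one, sub_self]
  have hww : star w ⬝ᵥ w = 0 := by
    rw [star_sub, sub_dotProduct, star_smul, smul_dotProduct, h w hψw, hψw, smul_zero, sub_zero]
  exact sub_eq_zero.mp (dotProduct_star_self_eq_zero.mp hww)

lemma vecMulVec_star_eq_of_eq_smul {ψ φ : ι → ℂ} {c : ℂ} (hψ : star ψ ⬝ᵥ ψ = 1)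
    (hφ : star φ ⬝ᵥ φ = 1) (h : φ = c • ψ) :
    vecMulVec φ (star φ) = vecMulVec ψ (star ψ) := by
  have hc : c * star c = 1 := by
    rw [h, star_smul, smul_dotProduct, dotProduct_smul, hψ] at hφ
    simpa [mul_comm] using hφ
  rw [h, star_smul, smul_vecMulVec, vecMulVec_smul, smul_smul, hc, one_smul]

lemma vecMulVec_star_eq_of_vecMulVec_eq_sum {ψ : ι → ℂ} {p : κ → ℝ} {φ : κ → ι → ℂ}
    (hψ : star ψ ⬝ᵥ ψ = 1) (hφ : ∀ j, star (φ j) ⬝ᵥ φ j = 1) (hp : ∀ j, 0 ≤ p j)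
    (hρ : vecMulVec ψ (star ψ) = ∑ j, (p j : ℂ) • vecMulVec (φ j) (star (φ j)))
    {i : κ} (hi : p i ≠ 0) :
    vecMulVec (φ i) (star (φ i)) = vecMulVec ψ (star ψ) :=
  vecMulVec_star_eq_of_eq_smul hψ (hφ i) <| eq_smul_of_forall_dotProduct_eq_zero hψ
    fun _ hw => dotProduct_eq_zero_of_vecMulVec_eq_sum hp hρ hw hi

lemma sum_mul_eq_of_vecMulVec_eq_sum {ψ : ι → ℂ} {p : κ → ℝ} {φ : κ → ι → ℂ}
    (hψ : star ψ ⬝ᵥ ψ = 1) (hφ : ∀ j, star (φ j) ⬝ᵥ φ j = 1) (hp : ∀ j, 0 ≤ p j)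
    (hp₁ : ∑ j, p j = 1)
    (hρ : vecMulVec ψ (star ψ) = ∑ j, (p j : ℂ) • vecMulVec (φ j) (star (φ j)))
    (f : Matrix ι ι ℂ → ℝ) :
    ∑ j, p j * f (vecMulVec (φ j) (star (φ j))) = f (vecMulVec ψ (star ψ)) := by
  calc ∑ j, p j * f (vecMulVec (φ j) (star (φ j))) = ∑ j, p j * f (vecMulVec ψ (star ψ)) := by
        refine Finset.sum_congr rfl fun j _ => ?_
        rcases eq_or_ne (p j) 0 with hj | hj
        · rw [hj, zero_mul, zero_mul]
        · rw [vecMulVec_star_eq_of_vecMulVec_eq_sum hψ hφ hp hρ hj]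
    _ = f (vecMulVec ψ (star ψ)) := by rw [← Finset.sum_mul, hp₁, one_mul]

end PureEnsemble

/-- for a pure bipartite state `ρ_AB = |ψ⟩⟨ψ|`, the entanglement of
formation equals the local von Neumann entropy: `E_F(ρ_AB) = S(ρ_A)`. -/
theorem eof_pure_state_eq_local_entropy
    (dA dB : ℕ) (ψ : Fin dA × Fin dB → ℂ) (hψ : ∑ v, ‖ψ v‖ ^ 2 = 1) :
    EoF (Matrix.vecMulVec ψ (star ψ)) =
      vN (ptraceB (Matrix.vecMulVec ψ (star ψ))) := by
  have unit_of_sum_norm_sq {φ : Fin dA × Fin dB → ℂ} (h : ∑ v, ‖φ v‖ ^ 2 = 1) :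
      star φ ⬝ᵥ φ = 1 := by
    rw [star_dotProduct_self_eq_sum_norm_sq, h, Complex.ofReal_one]
  rw [EoF, ← csInf_singleton (vN (ptraceB (vecMulVec ψ (star ψ))))]
  congr 1
  refine Set.eq_singleton_iff_unique_mem.mpr ⟨?_, ?_⟩
  · exact ⟨1, fun _ => 1, fun _ => ψ, fun _ => zero_le_one, by simp, fun _ => hψ, by simp, by simp⟩
  · rintro x ⟨n, p, φ, hp, hp₁, hφ, hρ, rfl⟩
    exact sum_mul_eq_of_vecMulVec_eq_sum (unit_of_sum_norm_sq hψ)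
      (fun j => unit_of_sum_norm_sq (hφ j)) hp hp₁ hρ (vN ∘ ptraceB)
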